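/- (Cramér–Rao-type variance lower bound.) Let θ : ℝ → ℝ be twice continuously differentiable with exp(−θ) integrable, and let p be the probability measure on ℝ with density proportional to exp(−θ). Assume p has finite second moment, θ'(x)², θ''(x) and x·θ'(x) are p-integrable, and both exp(−θ(x)) and θ'(x)·exp(−θ(x)) tend to 0 as x → ±∞. Then Var_p(x) · E_p[θ''(x)] ≥ 1; equivalently, the precision of p satisfies Var_p(x)⁻¹ ≤ E_p[θ''(x)]. -/

import Mathlib

open MeasureTheory Real Filter

noncomputable section

/-- The probability measure on ℝ with density proportional to `exp (−θ)`. -/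
def gibbs (θ : ℝ → ℝ) : Measure ℝ :=
  ((volume.withDensity fun x => ENNReal.ofReal (Real.exp (-θ x))) Set.univ)⁻¹ •
    (volume.withDensity fun x => ENNReal.ofReal (Real.exp (-θ x)))

/-!
Integration by parts against `exp (−θ)` gives Stein's identity `E_p[u'] = E_p[u θ']`; the
boundary terms vanish because `u exp (−θ)` and its derivative are both Lebesgue integrable.
Taking `u = 1`, `u = x` and `u = θ'` yields `E_p[θ'] = 0`, `Cov_p(x, θ') = E_p[x θ'] = 1` and
`Var_p(θ') = E_p[θ'²] = E_p[θ'']`, so Cauchy–Schwarz `Cov_p(x, θ')² ≤ Var_p(x) Var_p(θ')` is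
the claimed bound.
-/

open ProbabilityTheory

theorem covariance_sq_le_variance_mul {Ω : Type*} [MeasurableSpace Ω] {μ : Measure Ω}
    [IsFiniteMeasure μ] {X Y : Ω → ℝ} (hX : MemLp X 2 μ) (hY : MemLp Y 2 μ) :
    cov[X, Y; μ] ^ 2 ≤ Var[X; μ] * Var[Y; μ] := by
  have hquad (t : ℝ) : 0 ≤ Var[Y; μ] * (t * t) + (-2 * cov[X, Y; μ]) * t + Var[X; μ] := by
    have h := variance_nonneg (X - t • Y) μ
    rw [variance_sub hX (hY.const_smul t), variance_smul, covariance_smul_right] at h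
    linarith
  have h := discrim_le_zero hquad
  rw [discrim] at h
  linarith

def unnormalizedGibbs (θ : ℝ → ℝ) : Measure ℝ :=
  volume.withDensity fun x => ENNReal.ofReal (Real.exp (-θ x))

lemma gibbs_eq_smul (θ : ℝ → ℝ) :
    gibbs θ = (unnormalizedGibbs θ Set.univ)⁻¹ • unnormalizedGibbs θ := rfl

lemma integrable_unnormalizedGibbs_iff {θ : ℝ → ℝ} (hθ : Measurable θ) {f : ℝ → ℝ} :
    Integrable f (unnormalizedGibbs θ) ↔ Integrable fun x => f x * Real.exp (-θ x) := by
  rw [unnormalizedGibbs, integrable_withDensity_iff (by fun_prop) (by simp)]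
  simp_rw [ENNReal.toReal_ofReal (Real.exp_pos _).le]

lemma integral_unnormalizedGibbs {θ : ℝ → ℝ} (hθ : Measurable θ) (f : ℝ → ℝ) :
    ∫ x, f x ∂unnormalizedGibbs θ = ∫ x, f x * Real.exp (-θ x) := by
  rw [unnormalizedGibbs, integral_withDensity_eq_integral_toReal_smul (by fun_prop) (by simp)]
  simp_rw [ENNReal.toReal_ofReal (Real.exp_pos _).le, smul_eq_mul, mul_comm]

lemma unnormalizedGibbs_univ_ne_zero {θ : ℝ → ℝ}
    (hint : Integrable fun x => Real.exp (-θ x)) :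
    unnormalizedGibbs θ Set.univ ≠ 0 := by
  rw [Ne, Measure.measure_univ_eq_zero, unnormalizedGibbs,
    withDensity_eq_zero_iff hint.aemeasurable.ennreal_ofReal]
  intro h
  obtain ⟨x, hx⟩ := h.exists
  rw [Pi.zero_apply, ENNReal.ofReal_eq_zero] at hx
  exact (Real.exp_pos _).not_ge hx

lemma unnormalizedGibbs_univ_ne_top {θ : ℝ → ℝ}
    (hint : Integrable fun x => Real.exp (-θ x)) :
    unnormalizedGibbs θ Set.univ ≠ ⊤ :=
  (isFiniteMeasure_withDensity_ofReal hint.2).measure_univ_lt_top.ne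

lemma isProbabilityMeasure_gibbs {θ : ℝ → ℝ} (hint : Integrable fun x => Real.exp (-θ x)) :
    IsProbabilityMeasure (gibbs θ) :=
  ⟨ENNReal.inv_mul_cancel (unnormalizedGibbs_univ_ne_zero hint)
    (unnormalizedGibbs_univ_ne_top hint)⟩

theorem integral_deriv_eq_integral_mul_deriv_unnormalizedGibbs {θ θ' u u' : ℝ → ℝ}
    (hθ : ∀ x, HasDerivAt θ (θ' x) x) (hu : ∀ x, HasDerivAt u (u' x) x)
    (hu_int : Integrable u (unnormalizedGibbs θ)) (hu'_int : Integrable u' (unnormalizedGibbs θ))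
    (huθ'_int : Integrable (fun x => u x * θ' x) (unnormalizedGibbs θ)) :
    ∫ x, u' x ∂unnormalizedGibbs θ = ∫ x, u x * θ' x ∂unnormalizedGibbs θ := by
  have hθ_meas : Measurable θ :=
    (continuous_iff_continuousAt.2 fun x => (hθ x).continuousAt).measurable
  rw [integrable_unnormalizedGibbs_iff hθ_meas] at hu_int hu'_int huθ'_int
  rw [integral_unnormalizedGibbs hθ_meas, integral_unnormalizedGibbs hθ_meas, ← sub_eq_zero,
    ← integral_sub hu'_int huθ'_int]
  refine integral_eq_zero_of_hasDerivAt_of_integrable (fun x => ?_) (hu'_int.sub huθ'_int) hu_int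
  exact ((hu x).fun_mul (hθ x).fun_neg.exp).congr_deriv (by ring)

theorem integral_deriv_eq_integral_mul_deriv_gibbs {θ θ' u u' : ℝ → ℝ}
    (hθ : ∀ x, HasDerivAt θ (θ' x) x) (hu : ∀ x, HasDerivAt u (u' x) x)
    (hint : Integrable fun x => Real.exp (-θ x))
    (hu_int : Integrable u (gibbs θ)) (hu'_int : Integrable u' (gibbs θ))
    (huθ'_int : Integrable (fun x => u x * θ' x) (gibbs θ)) :
    ∫ x, u' x ∂gibbs θ = ∫ x, u x * θ' x ∂gibbs θ := by
  have hc_ne_zero : (unnormalizedGibbs θ Set.univ)⁻¹ ≠ 0 :=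
    ENNReal.inv_ne_zero.2 (unnormalizedGibbs_univ_ne_top hint)
  have hc_ne_top : (unnormalizedGibbs θ Set.univ)⁻¹ ≠ ⊤ :=
    ENNReal.inv_ne_top.2 (unnormalizedGibbs_univ_ne_zero hint)
  rw [gibbs_eq_smul, integrable_smul_measure hc_ne_zero hc_ne_top] at hu_int hu'_int huθ'_int
  rw [gibbs_eq_smul, integral_smul_measure, integral_smul_measure,
    integral_deriv_eq_integral_mul_deriv_unnormalizedGibbs hθ hu hu_int hu'_int huθ'_int]

section Stein

variable {θ θ' : ℝ → ℝ} (hθ : ∀ x, HasDerivAt θ (θ' x) x)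
  (hint : Integrable fun x => Real.exp (-θ x))
include hθ hint

theorem integral_deriv_gibbs_eq_zero (hθ'_int : Integrable θ' (gibbs θ)) :
    ∫ x, θ' x ∂gibbs θ = 0 := by
  have := isProbabilityMeasure_gibbs hint
  simpa using (integral_deriv_eq_integral_mul_deriv_gibbs hθ (fun _ => hasDerivAt_const _ 1)
    hint (integrable_const _) (integrable_const 0) (by simpa using hθ'_int)).symm

theorem integral_mul_deriv_gibbs_eq_one (hx_int : Integrable (fun x => x) (gibbs θ))
    (hxθ'_int : Integrable (fun x => x * θ' x) (gibbs θ)) :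
    ∫ x, x * θ' x ∂gibbs θ = 1 := by
  have := isProbabilityMeasure_gibbs hint
  simpa using (integral_deriv_eq_integral_mul_deriv_gibbs hθ hasDerivAt_id' hint hx_int
    (integrable_const 1) hxθ'_int).symm

theorem integral_deriv_deriv_gibbs_eq_integral_sq {θ'' : ℝ → ℝ}
    (hθ' : ∀ x, HasDerivAt θ' (θ'' x) x) (hθ'_int : Integrable θ' (gibbs θ))
    (hθ''_int : Integrable θ'' (gibbs θ))
    (hθ'_sq_int : Integrable (fun x => θ' x ^ 2) (gibbs θ)) :
    ∫ x, θ'' x ∂gibbs θ = ∫ x, θ' x ^ 2 ∂gibbs θ := by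
  simpa [sq] using integral_deriv_eq_integral_mul_deriv_gibbs hθ hθ' hint hθ'_int hθ''_int
    (by simpa [sq] using hθ'_sq_int)

end Stein

theorem cramer_rao_lower_bound_general
    (θ : ℝ → ℝ) (hθ : ContDiff ℝ 2 θ)
    (hint : Integrable fun x => Real.exp (-θ x))
    (hm1 : Integrable (fun x => x) (gibbs θ))
    (hm2 : Integrable (fun x => x ^ 2) (gibbs θ))
    (h1 : Integrable (fun x => (deriv θ x) ^ 2) (gibbs θ))
    (h2 : Integrable (fun x => iteratedDeriv 2 θ x) (gibbs θ))
    (h3 : Integrable (fun x => x * deriv θ x) (gibbs θ)) :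
    1 ≤ ((∫ x, x ^ 2 ∂(gibbs θ)) - (∫ x, x ∂(gibbs θ)) ^ 2) *
        (∫ x, iteratedDeriv 2 θ x ∂(gibbs θ)) ∧
    ((∫ x, x ^ 2 ∂(gibbs θ)) - (∫ x, x ∂(gibbs θ)) ^ 2)⁻¹ ≤
        ∫ x, iteratedDeriv 2 θ x ∂(gibbs θ) := by
  have := isProbabilityMeasure_gibbs hint
  have hθ' (x : ℝ) : HasDerivAt θ (deriv θ x) x :=
    (hθ.differentiable (by norm_num) x).hasDerivAt
  have hθ'' (x : ℝ) : HasDerivAt (deriv θ) (iteratedDeriv 2 θ x) x := by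
    rw [iteratedDeriv_succ, iteratedDeriv_one]
    exact (hθ.differentiable_deriv_two x).hasDerivAt
  have hX : MemLp (fun x => x) 2 (gibbs θ) :=
    (memLp_two_iff_integrable_sq aestronglyMeasurable_id).2 hm2
  have hY : MemLp (deriv θ) 2 (gibbs θ) :=
    (memLp_two_iff_integrable_sq (hθ.continuous_deriv (by norm_num)).aestronglyMeasurable).2 h1
  have hscore := integral_deriv_gibbs_eq_zero hθ' hint (hY.integrable one_le_two)
  have hcov : cov[fun x => x, deriv θ; gibbs θ] = 1 := by
    rw [covariance_eq_sub hX hY, hscore, mul_zero, sub_zero]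
    exact integral_mul_deriv_gibbs_eq_one hθ' hint hm1 h3
  have hfisher : Var[deriv θ; gibbs θ] = ∫ x, iteratedDeriv 2 θ x ∂gibbs θ := by
    rw [variance_eq_sub hY, hscore, integral_deriv_deriv_gibbs_eq_integral_sq hθ' hint hθ''
      (hY.integrable one_le_two) h2 h1]
    simp
  have hbound : 1 ≤ Var[fun x => x; gibbs θ] * Var[deriv θ; gibbs θ] := by
    simpa [hcov] using covariance_sq_le_variance_mul hX hY
  have hvar_pos : 0 < Var[fun x => x; gibbs θ] :=
    (variance_nonneg _ _).lt_of_ne fun h => by rw [← h, zero_mul] at hbound; norm_num at hbound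
  rw [hfisher] at hbound
  rw [variance_eq_sub hX] at hbound hvar_pos
  exact ⟨hbound, (inv_le_iff_one_le_mul₀' hvar_pos).2 hbound⟩

/-- Cramér–Rao-type variance lower bound: for `p ∝ exp (−θ)` with
`θ` C², `exp (−θ)` integrable, finite second moment, `θ'²`, `θ''` and `x·θ'(x)`
`p`-integrable, and both `exp (−θ)` and `θ'·exp (−θ)` vanishing at `±∞`, one has
`Var_p(x) · E_p[θ''(x)] ≥ 1`, equivalently `Var_p(x)⁻¹ ≤ E_p[θ''(x)]`. -/
theorem cramer_rao_lower_bound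
    (θ : ℝ → ℝ) (hθ : ContDiff ℝ 2 θ)
    (hint : Integrable fun x => Real.exp (-θ x))
    (hm1 : Integrable (fun x => x) (gibbs θ))
    (hm2 : Integrable (fun x => x ^ 2) (gibbs θ))
    (h1 : Integrable (fun x => (deriv θ x) ^ 2) (gibbs θ))
    (h2 : Integrable (fun x => iteratedDeriv 2 θ x) (gibbs θ))
    (h3 : Integrable (fun x => x * deriv θ x) (gibbs θ))
    (htop0 : Tendsto (fun x => Real.exp (-θ x)) atTop (nhds 0))
    (hbot0 : Tendsto (fun x => Real.exp (-θ x)) atBot (nhds 0))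
    (htop1 : Tendsto (fun x => deriv θ x * Real.exp (-θ x)) atTop (nhds 0))
    (hbot1 : Tendsto (fun x => deriv θ x * Real.exp (-θ x)) atBot (nhds 0)) :
    1 ≤ ((∫ x, x ^ 2 ∂(gibbs θ)) - (∫ x, x ∂(gibbs θ)) ^ 2) *
        (∫ x, iteratedDeriv 2 θ x ∂(gibbs θ)) ∧
    ((∫ x, x ^ 2 ∂(gibbs θ)) - (∫ x, x ∂(gibbs θ)) ^ 2)⁻¹ ≤
        ∫ x, iteratedDeriv 2 θ x ∂(gibbs θ) :=
  cramer_rao_lower_bound_general θ hθ hint hm1 hm2 h1 h2 h3
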